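/- Consider the two-player game with strategy space [0,1] for each player, qualities Q_1(x_1,x_2) = 0.5·x_1 and Q_2(x_1,x_2) = x_1·x_2, and Tullock allocation: if Q_1(x) + Q_2(x) > 0 then player i receives T_i(x) = Q_i(x)/(Q_1(x)+Q_2(x)), while if Q_1(x) = Q_2(x) = 0 then each player receives T_i(x) = 1/2. Utilities are U_i(x_1,x_2) = T_i(x_1,x_2) − 0.25·x_i for i = 1,2. Then this game has no pure Nash equilibrium: there is no (x_1*, x_2*) ∈ [0,1]² such that U_1(x_1*,x_2*) ≥ U_1(x_1,x_2*) for all x_1 ∈ [0,1] and U_2(x_1*,x_2*) ≥ U_2(x_1*,x_2) for all x_2 ∈ [0,1]. -/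

import Mathlib

/-!
Both qualities are proportional to `x₁`, so once `x₁ > 0` player 1's share does not depend on
`x₁`, and halving `x₁` saves cost: no positive `x₁` is a best response. Against `x₁ = 0` player 2
always gets the uniform share `1/2`, so her unique best response is `x₂ = 0`; but against
`x₂ = 0` player 1 gains by entering, since `x₁ = 1` wins the whole share at cost `1/4`.
-/

noncomputable def tullockQ1 (x₁ x₂ : ℝ) : ℝ := 0.5 * x₁

noncomputable def tullockQ2 (x₁ x₂ : ℝ) : ℝ := x₁ * x₂

open Classical in
noncomputable def tullockShare (Q1 Q2 : ℝ) : ℝ :=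
  if Q1 + Q2 > 0 then Q1 / (Q1 + Q2) else 1 / 2

noncomputable def tullockU1 (x₁ x₂ : ℝ) : ℝ :=
  tullockShare (tullockQ1 x₁ x₂) (tullockQ2 x₁ x₂) - 0.25 * x₁

noncomputable def tullockU2 (x₁ x₂ : ℝ) : ℝ :=
  tullockShare (tullockQ2 x₁ x₂) (tullockQ1 x₁ x₂) - 0.25 * x₂

theorem tullockShare_zero_zero : tullockShare 0 0 = 1 / 2 := by
  simp [tullockShare]

theorem tullockShare_of_pos_zero {a : ℝ} (ha : 0 < a) : tullockShare a 0 = 1 := by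
  simp [tullockShare, ha, ha.ne']

theorem tullockShare_mul_left {c : ℝ} (hc : 0 < c) (a b : ℝ) :
    tullockShare (c * a) (c * b) = tullockShare a b := by
  have hsum : c * a + c * b = c * (a + b) := by ring
  simp only [tullockShare, hsum, gt_iff_lt, mul_pos_iff_of_pos_left hc,
    mul_div_mul_left _ _ hc.ne']

theorem tullockU1_of_pos {y : ℝ} (hy : 0 < y) (x₂ : ℝ) :
    tullockU1 y x₂ = tullockShare 0.5 x₂ - 0.25 * y := by
  rw [tullockU1, tullockQ1, tullockQ2, mul_comm 0.5 y, tullockShare_mul_left hy]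

theorem tullockU1_lt_half {y : ℝ} (hy : 0 < y) (x₂ : ℝ) :
    tullockU1 y x₂ < tullockU1 (y / 2) x₂ := by
  rw [tullockU1_of_pos hy, tullockU1_of_pos (half_pos hy)]
  linarith

theorem tullockU2_zero_left (y : ℝ) : tullockU2 0 y = 1 / 2 - 0.25 * y := by
  simp only [tullockU2, tullockQ1, tullockQ2, mul_zero, zero_mul, tullockShare_zero_zero]

theorem tullockU1_zero_zero_lt_one_zero : tullockU1 0 0 < tullockU1 1 0 := by
  have hzero : tullockU1 0 0 = 1 / 2 := by
    simp only [tullockU1, tullockQ1, tullockQ2, mul_zero, tullockShare_zero_zero, sub_zero]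
  have hone : tullockU1 1 0 = 1 - 0.25 := by
    rw [tullockU1_of_pos one_pos, tullockShare_of_pos_zero (by norm_num), mul_one]
  rw [hzero, hone]
  norm_num

/-- The two-player Tullock game with qualities
`Q₁ = 0.5·x₁`, `Q₂ = x₁·x₂` and costs `0.25·xᵢ` has no pure Nash equilibrium. -/
theorem tullock_no_pure_nash_equilibrium :
    ¬ ∃ x₁ x₂ : ℝ, x₁ ∈ Set.Icc (0 : ℝ) 1 ∧ x₂ ∈ Set.Icc (0 : ℝ) 1 ∧
      (∀ y ∈ Set.Icc (0 : ℝ) 1, tullockU1 y x₂ ≤ tullockU1 x₁ x₂) ∧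
      (∀ y ∈ Set.Icc (0 : ℝ) 1, tullockU2 x₁ y ≤ tullockU2 x₁ x₂) := by
  rintro ⟨x₁, x₂, ⟨hx₁_nonneg, hx₁_le⟩, ⟨hx₂_nonneg, -⟩, hbest₁, hbest₂⟩
  obtain rfl : x₁ = 0 := by
    by_contra hne
    have hpos : 0 < x₁ := lt_of_le_of_ne hx₁_nonneg (Ne.symm hne)
    exact (tullockU1_lt_half hpos x₂).not_ge (hbest₁ _ ⟨by positivity, by linarith⟩)
  obtain rfl : x₂ = 0 := by
    have h := hbest₂ 0 ⟨le_rfl, zero_le_one⟩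
    rw [tullockU2_zero_left, tullockU2_zero_left] at h
    linarith
  exact tullockU1_zero_zero_lt_one_zero.not_ge (hbest₁ 1 ⟨zero_le_one, le_rfl⟩)
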